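/- Let H be a real normed vector space, λ ≥ 0, c > 0, and let s_λ : H → H satisfy condition (i) with constant c, condition (ii), and condition (iii). Let Φ̂, Φ̃ ∈ H with ‖Φ̂ − Φ̃‖ ≤ λ. Then for every q ∈ [0, 1], ‖s_λ(Φ̂) − Φ̃‖ ≤ (2 + c)·λ^{1−q}·‖Φ̃‖^q, where powers are real powers. -/

import Mathlib

/-!
By (iii) and the triangle inequality `‖s_λ(Φ̂) − Φ̃‖ ≤ 2λ`, and by (i) applied to `Z = Φ̂`,
`Y = Φ̃` it is at most `(1 + c)‖Φ̃‖`; hence it is at most `(2 + c) · min(λ, ‖Φ̃‖)`, and the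
minimum of two nonnegative numbers lies below every weighted geometric mean of them.
-/

open Real

theorem min_le_rpow_mul_rpow {a b q : ℝ} (ha : 0 ≤ a) (hb : 0 ≤ b) (hq0 : 0 ≤ q) (hq1 : q ≤ 1) :
    min a b ≤ a ^ (1 - q) * b ^ q := by
  have hmin : 0 ≤ min a b := le_min ha hb
  calc min a b = min a b ^ (1 - q) * min a b ^ q := by
        rw [← rpow_add_of_nonneg hmin (by linarith) hq0, sub_add_cancel, rpow_one]
    _ ≤ a ^ (1 - q) * b ^ q :=
        mul_le_mul (rpow_le_rpow hmin (min_le_left a b) (by linarith))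
          (rpow_le_rpow hmin (min_le_right a b) hq0) (rpow_nonneg hmin q) (rpow_nonneg ha _)

theorem norm_sub_le_two_add_mul_min {E : Type*} [SeminormedAddCommGroup E] {lam c : ℝ}
    (hc : 0 ≤ c) {u x y : E} (hu : ‖u‖ ≤ c * ‖y‖) (hux : ‖u - x‖ ≤ lam) (hxy : ‖x - y‖ ≤ lam) :
    ‖u - y‖ ≤ (2 + c) * min lam ‖y‖ := by
  have hlam : 0 ≤ lam := (norm_nonneg _).trans hxy
  have h_lam : ‖u - y‖ ≤ 2 * lam :=
    calc ‖u - y‖ ≤ ‖u - x‖ + ‖x - y‖ := norm_sub_le_norm_sub_add_norm_sub u x y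
      _ ≤ 2 * lam := by linarith
  have h_norm : ‖u - y‖ ≤ (1 + c) * ‖y‖ :=
    calc ‖u - y‖ ≤ ‖u‖ + ‖y‖ := norm_sub_le u y
      _ ≤ (1 + c) * ‖y‖ := by linarith
  rw [mul_min_of_nonneg _ _ (by linarith)]
  exact le_min (by nlinarith) (by nlinarith [norm_nonneg y])

theorem thresholding_entrywise_bound {H : Type*} [NormedAddCommGroup H]
    (lam c : ℝ) (hlam : 0 ≤ lam) (hc : 0 < c) (s : H → H)
    (hcond_i : ∀ Z Y : H, ‖Z - Y‖ ≤ lam → ‖s Z‖ ≤ c * ‖Y‖)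
    (hcond_iii : ∀ Z : H, ‖s Z - Z‖ ≤ lam)
    (Phihat Phitilde : H) (hPhi : ‖Phihat - Phitilde‖ ≤ lam)
    (q : ℝ) (hq0 : 0 ≤ q) (hq1 : q ≤ 1) :
    ‖s Phihat - Phitilde‖ ≤ (2 + c) * lam ^ (1 - q) * ‖Phitilde‖ ^ q := by
  calc ‖s Phihat - Phitilde‖ ≤ (2 + c) * min lam ‖Phitilde‖ :=
        norm_sub_le_two_add_mul_min hc.le (hcond_i _ _ hPhi) (hcond_iii _) hPhi
    _ ≤ (2 + c) * (lam ^ (1 - q) * ‖Phitilde‖ ^ q) :=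
        mul_le_mul_of_nonneg_left (min_le_rpow_mul_rpow hlam (norm_nonneg _) hq0 hq1)
          (by linarith)
    _ = (2 + c) * lam ^ (1 - q) * ‖Phitilde‖ ^ q := (mul_assoc _ _ _).symm
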